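/- arXiv:1702.05049 — 4 statements merged into one kernel-verified Lean document; each statement's English description precedes it below -/
import Mathlib

section
/- Let (e_n)_{n≥1} be an orthonormal basis of H, x_n = Σ_{k=1}^n (1/k) e_k, and h = Σ_{k=1}^∞ (1/k) e_k (which converges in H since Σ 1/k² < ∞). Then there is no sequence of complex numbers (α_k) such that the series Σ_{k=1}^∞ α_k x_k converges in H to h. -/
open scoped InnerProductSpace
open Filter Topology

theorem stmt2 {H : Type*} [NormedAddCommGroup H] [InnerProductSpace ℂ H] [CompleteSpace H]
    (b : HilbertBasis ℕ ℂ H) (x : ℕ → H)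
    (hx : ∀ n, x n = ∑ k ∈ Finset.range (n + 1), ((k : ℂ) + 1)⁻¹ • b k)
    (h : H) (hh : HasSum (fun k : ℕ => ((k : ℂ) + 1)⁻¹ • b k) h) :
    ¬ ∃ α : ℕ → ℂ,
      Tendsto (fun N => ∑ k ∈ Finset.range N, α k • x k) atTop (𝓝 h) := by
  rintro ⟨α, hα⟩
  have horth := orthonormal_iff_ite.mp b.orthonormal
  -- inner products with basis vectors
  have hbx : ∀ m k : ℕ, ⟪b m, x k⟫_ℂ = if m ≤ k then ((m : ℂ) + 1)⁻¹ else 0 := by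
    intro m k
    rw [hx, inner_sum]
    simp only [inner_smul_right, horth, mul_ite, mul_one, mul_zero]
    rw [Finset.sum_ite_eq (Finset.range (k + 1)) m (fun j => ((j : ℂ) + 1)⁻¹)]
    simp [Nat.lt_succ_iff]
  -- inner product of b m with h
  have hbh : ∀ m : ℕ, ⟪b m, h⟫_ℂ = ((m : ℂ) + 1)⁻¹ := by
    intro m
    have h1 : HasSum (fun k : ℕ => ⟪b m, ((k : ℂ) + 1)⁻¹ • b k⟫_ℂ) ⟪b m, h⟫_ℂ :=
      hh.mapL (innerSL ℂ (b m))
    have h2 : HasSum (fun k : ℕ => ⟪b m, ((k : ℂ) + 1)⁻¹ • b k⟫_ℂ) (((m : ℂ) + 1)⁻¹) := by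
      have := hasSum_ite_eq m (((m : ℂ) + 1)⁻¹)
      refine this.congr_fun fun k => ?_
      simp only [inner_smul_right, horth, mul_ite, mul_one, mul_zero]
      rcases eq_or_ne k m with hk | hk
      · subst hk; simp
      · simp [hk, Ne.symm hk]
    exact h1.unique h2
  have hm1 : ∀ m : ℕ, ((m : ℂ) + 1) ≠ 0 := fun m => by
    exact Nat.cast_add_one_ne_zero m
  -- tendsto of inner products
  have hinner : ∀ m : ℕ, Tendsto (fun N => ((m : ℂ) + 1)⁻¹ * ∑ k ∈ Finset.Ico m N, α k)
      atTop (𝓝 (((m : ℂ) + 1)⁻¹)) := by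
    intro m
    have h1 : Tendsto (fun N => ⟪b m, ∑ k ∈ Finset.range N, α k • x k⟫_ℂ) atTop
        (𝓝 ⟪b m, h⟫_ℂ) := Tendsto.inner tendsto_const_nhds hα
    have heq : ∀ N, ⟪b m, ∑ k ∈ Finset.range N, α k • x k⟫_ℂ
        = ((m : ℂ) + 1)⁻¹ * ∑ k ∈ Finset.Ico m N, α k := by
      intro N
      rw [inner_sum, Finset.mul_sum]
      simp only [inner_smul_right, hbx, mul_ite, mul_zero]
      rw [Finset.sum_ite, Finset.sum_const_zero, add_zero]
      have hfe : (Finset.range N).filter (fun k => m ≤ k) = Finset.Ico m N := by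
        ext k
        simp [Finset.mem_Ico, and_comm]
      rw [hfe]
      exact Finset.sum_congr rfl fun k _ => mul_comm _ _
    rw [hbh m] at h1
    exact h1.congr heq
  -- tail sums tend to 1
  have htail : ∀ m : ℕ, Tendsto (fun N => ∑ k ∈ Finset.Ico m N, α k) atTop (𝓝 1) := by
    intro m
    have h1 := (hinner m).const_mul ((m : ℂ) + 1)
    have hc : ((m : ℂ) + 1) * ((m : ℂ) + 1)⁻¹ = 1 := mul_inv_cancel₀ (hm1 m)
    simp only [← mul_assoc, hc, one_mul] at h1
    exact h1
  -- hence each α m = 0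
  have hα0 : ∀ m, α m = 0 := by
    intro m
    have h1 := (htail m).sub (htail (m + 1))
    have h2 : Tendsto (fun _ : ℕ => α m) atTop (𝓝 ((1 : ℂ) - 1)) := by
      refine h1.congr' ?_
      filter_upwards [eventually_ge_atTop (m + 1)] with N hN
      have := Finset.sum_eq_sum_Ico_succ_bot (lt_of_lt_of_le (Nat.lt_succ_self m) hN) α
      rw [this]; ring
    have h3 := tendsto_nhds_unique h2 (tendsto_const_nhds (x := α m) (f := atTop (α := ℕ)))
    simpa using h3.symm
  -- then the partial sums are 0, so h = 0
  have h0 : Tendsto (fun N => ∑ k ∈ Finset.range N, α k • x k) atTop (𝓝 (0 : H)) := by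
    have : ∀ N, ∑ k ∈ Finset.range N, α k • x k = 0 := by
      intro N; simp [hα0]
    simp only [this]
    exact tendsto_const_nhds
  have hh0 : h = 0 := tendsto_nhds_unique hα h0
  have := hbh 0
  rw [hh0, inner_zero_right] at this
  simp at this
end

section
/- Let (e_n)_{n≥1} be an orthonormal basis of H, x_n = Σ_{k=1}^n (1/k) e_k, y_n = n e_n − (n+1) e_{n+1}, and let G = span{e_n}. Then (x_n) and (y_n) are G-quasi bases: for all f, g ∈ G, ⟨f, g⟩ = Σ_{n=1}^∞ ⟨f, x_n⟩⟨y_n, g⟩ = Σ_{n=1}^∞ ⟨f, y_n⟩⟨x_n, g⟩ (both series converge). -/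
/-!
For basis vectors, `⟪e i, x n⟫ = [i ≤ n] / (i + 1)` and
`⟪y n, e j⟫ = (j + 1) ([n = j] - [n + 1 = j])`, so the series over `n` telescopes to
`(j + 1) / (i + 1) ([i ≤ j] - [i < j]) = δ i j`. Sesquilinearity extends this to the span `G`,
and the second expansion is the complex conjugate of the first with `f` and `g` exchanged.
-/

open scoped InnerProductSpace

section Expansion

variable {𝕜 E β : Type*} [RCLike 𝕜] [NormedAddCommGroup E] [InnerProductSpace 𝕜 E]
  {φ ψ : β → E}

theorem HasSum.inner_mul_inner_swap {f g : E}
    (h : HasSum (fun n => ⟪f, φ n⟫_𝕜 * ⟪ψ n, g⟫_𝕜) ⟪f, g⟫_𝕜) :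
    HasSum (fun n => ⟪g, ψ n⟫_𝕜 * ⟪φ n, f⟫_𝕜) ⟪g, f⟫_𝕜 := by
  simpa only [star_mul', RCLike.star_def, inner_conj_symm, mul_comm] using h.star

theorem hasSum_inner_mul_inner_right_of_mem_span {ι : Type*} {v : ι → E} {f g : E}
    (h : ∀ j, HasSum (fun n => ⟪f, φ n⟫_𝕜 * ⟪ψ n, v j⟫_𝕜) ⟪f, v j⟫_𝕜)
    (hg : g ∈ Submodule.span 𝕜 (Set.range v)) :
    HasSum (fun n => ⟪f, φ n⟫_𝕜 * ⟪ψ n, g⟫_𝕜) ⟪f, g⟫_𝕜 := by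
  induction hg using Submodule.span_induction with
  | mem g hg => obtain ⟨j, rfl⟩ := hg; exact h j
  | zero => simpa only [inner_zero_right, mul_zero] using hasSum_zero
  | add g₁ g₂ _ _ h₁ h₂ => simpa only [inner_add_right, mul_add] using h₁.add h₂
  | smul c g _ h => simpa only [inner_smul_right, mul_left_comm] using h.mul_left c

-- Linearity in `f` is conjugate linearity in the second slot after `HasSum.inner_mul_inner_swap`.
theorem hasSum_inner_mul_inner_of_mem_span {ι : Type*} {v : ι → E}
    (h : ∀ i j, HasSum (fun n => ⟪v i, φ n⟫_𝕜 * ⟪ψ n, v j⟫_𝕜) ⟪v i, v j⟫_𝕜)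
    {f g : E}
    (hf : f ∈ Submodule.span 𝕜 (Set.range v)) (hg : g ∈ Submodule.span 𝕜 (Set.range v)) :
    HasSum (fun n => ⟪f, φ n⟫_𝕜 * ⟪ψ n, g⟫_𝕜) ⟪f, g⟫_𝕜 := by
  refine (hasSum_inner_mul_inner_right_of_mem_span (fun i => ?_) hf).inner_mul_inner_swap
  exact (hasSum_inner_mul_inner_right_of_mem_span (h i) hg).inner_mul_inner_swap

end Expansion

theorem hasSum_ite_le_mul_sub_ite {K : Type*} [Ring K] [TopologicalSpace K]
    [IsTopologicalAddGroup K] (i j : ℕ) :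
    HasSum (fun n => (if i ≤ n then 1 else 0 : K) *
      ((if n = j then 1 else 0) - if n + 1 = j then 1 else 0)) (if i = j then 1 else 0) := by
  cases j with
  | zero =>
    convert hasSum_ite_eq 0 (if i = 0 then (1 : K) else 0) using 2 with n
    rcases n with _ | n <;> simp
  | succ k =>
    have h := (hasSum_ite_eq (k + 1) (if i ≤ k + 1 then (1 : K) else 0)).sub
      (hasSum_ite_eq k (if i ≤ k then (1 : K) else 0))
    have hval : (if i = k + 1 then 1 else 0 : K) =
        (if i ≤ k + 1 then 1 else 0) - if i ≤ k then 1 else 0 := by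
      split_ifs <;> first | omega | simp
    rw [hval]
    refine h.congr_fun fun n => ?_
    split_ifs <;> first | omega | simp

theorem hasSum_inner_mul_inner_of_orthonormal {𝕜 E : Type*} [RCLike 𝕜] [NormedAddCommGroup E]
    [InnerProductSpace 𝕜 E] {b x y : ℕ → E} (hb : Orthonormal 𝕜 b)
    (hx : ∀ n, x n = ∑ k ∈ Finset.range (n + 1), ((k : 𝕜) + 1)⁻¹ • b k)
    (hy : ∀ n, y n = ((n : 𝕜) + 1) • b n - ((n : 𝕜) + 2) • b (n + 1)) (i j : ℕ) :
    HasSum (fun n => ⟪b i, x n⟫_𝕜 * ⟪y n, b j⟫_𝕜) ⟪b i, b j⟫_𝕜 := by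
  have hb' := orthonormal_iff_ite.mp hb
  have hxi (n : ℕ) : ⟪b i, x n⟫_𝕜 = ((i : 𝕜) + 1)⁻¹ * if i ≤ n then 1 else 0 := by
    simp [hx, inner_sum, inner_smul_right, hb']
  -- the weights `n + 1` at `n = j` and `n + 2` at `n + 1 = j` are both `j + 1`
  have hyj (n : ℕ) : ⟪y n, b j⟫_𝕜 =
      ((j : 𝕜) + 1) * ((if n = j then 1 else 0) - if n + 1 = j then 1 else 0) := by
    rw [hy, inner_sub_left, inner_smul_left, inner_smul_left, hb', hb']
    simp only [map_add, map_natCast, map_one, map_ofNat]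
    split_ifs <;> first | omega | (subst_vars; push_cast; ring)
  have hcoeff : (if i = j then 1 else 0 : 𝕜) =
      ((i : 𝕜) + 1)⁻¹ * ((j : 𝕜) + 1) * if i = j then 1 else 0 := by
    split_ifs with hij
    · subst hij
      field_simp
    · simp
  rw [hb', hcoeff]
  refine ((hasSum_ite_le_mul_sub_ite i j).mul_left
    (((i : 𝕜) + 1)⁻¹ * ((j : 𝕜) + 1))).congr_fun fun n => ?_
  rw [hxi, hyj]
  ring

theorem stmt5_general {H : Type*} [NormedAddCommGroup H] [InnerProductSpace ℂ H]
    (b : HilbertBasis ℕ ℂ H) (x y : ℕ → H)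
    (hx : ∀ n, x n = ∑ k ∈ Finset.range (n + 1), ((k : ℂ) + 1)⁻¹ • b k)
    (hy : ∀ n, y n = ((n : ℂ) + 1) • b n - ((n : ℂ) + 2) • b (n + 1)) :
    ∀ f ∈ Submodule.span ℂ (Set.range fun n => b n),
      ∀ g ∈ Submodule.span ℂ (Set.range fun n => b n),
        HasSum (fun n => ⟪f, x n⟫_ℂ * ⟪y n, g⟫_ℂ) ⟪f, g⟫_ℂ ∧
        HasSum (fun n => ⟪f, y n⟫_ℂ * ⟪x n, g⟫_ℂ) ⟪f, g⟫_ℂ := by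
  intro f hf g hg
  have hbasis := hasSum_inner_mul_inner_of_orthonormal b.orthonormal hx hy
  exact ⟨hasSum_inner_mul_inner_of_mem_span hbasis hf hg,
    (hasSum_inner_mul_inner_of_mem_span hbasis hg hf).inner_mul_inner_swap⟩

theorem stmt5 {H : Type*} [NormedAddCommGroup H] [InnerProductSpace ℂ H] [CompleteSpace H]
    (b : HilbertBasis ℕ ℂ H) (x y : ℕ → H)
    (hx : ∀ n, x n = ∑ k ∈ Finset.range (n + 1), ((k : ℂ) + 1)⁻¹ • b k)
    (hy : ∀ n, y n = ((n : ℂ) + 1) • b n - ((n : ℂ) + 2) • b (n + 1)) :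
    ∀ f ∈ Submodule.span ℂ (Set.range fun n => b n),
      ∀ g ∈ Submodule.span ℂ (Set.range fun n => b n),
        HasSum (fun n => ⟪f, x n⟫_ℂ * ⟪y n, g⟫_ℂ) ⟪f, g⟫_ℂ ∧
        HasSum (fun n => ⟪f, y n⟫_ℂ * ⟪x n, g⟫_ℂ) ⟪f, g⟫_ℂ :=
  stmt5_general b x y hx hy
end

section
/- Let (e_n)_{n≥1} be an orthonormal basis of H, x_n = Σ_{k=1}^n (−1)^{n+k} e_k, y_n = e_n + e_{n+1}, and G = span{e_n}. Then for all f, g ∈ G, ⟨f, g⟩ = Σ_{n=1}^∞ ⟨f, y_n⟩⟨x_n, g⟩ = Σ_{n=1}^∞ ⟨f, x_n⟩⟨y_n, g⟩; i.e., (x_n) and (y_n) are G-quasi bases. -/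
/-!
Every `f ∈ G` has the finite expansion `f = ∑ ⟪y n, f⟫ • x n`. By linearity it suffices to check
it on a basis vector `e (i + 1)`, where it reads `x i + x (i + 1) = e (i + 1)`: consecutive
alternating sums telescope. Pairing the expansion of `f` with `g` gives the first identity; the
second is the complex conjugate of the first with `f` and `g` exchanged.
-/

open scoped InnerProductSpace
open Filter Topology

section Alternating

open Finset

variable {R M : Type*} [Ring R] [AddCommGroup M] [Module R M] {b x : ℕ → M}

lemma add_succ_eq_of_eq_alternating_sum
    (hx : ∀ n, x n = ∑ k ∈ range (n + 1), (-1 : R) ^ (n + k) • b k) (m : ℕ) :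
    x m + x (m + 1) = b (m + 1) := by
  have hneg : ∑ k ∈ range (m + 1), (-1 : R) ^ (m + 1 + k) • b k = -x m := by
    rw [hx m, ← sum_neg_distrib]
    refine sum_congr rfl fun k _ => ?_
    rw [add_right_comm, pow_succ, mul_neg_one, neg_smul]
  rw [hx (m + 1), sum_range_succ, hneg, ← two_mul, pow_mul, neg_one_sq, one_pow, one_smul]
  abel

end Alternating

section InnerProduct

variable {𝕜 E ι : Type*} [RCLike 𝕜] [NormedAddCommGroup E] [InnerProductSpace 𝕜 E]

section Expansion

variable {u v : ι → E} {f : E}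

lemma hasSum_inner_smul_of_mem_span {s : Set E}
    (hs : ∀ a ∈ s, HasSum (fun n => ⟪v n, a⟫_𝕜 • u n) a) (hf : f ∈ Submodule.span 𝕜 s) :
    HasSum (fun n => ⟪v n, f⟫_𝕜 • u n) f := by
  induction hf using Submodule.span_induction with
  | mem a ha => exact hs a ha
  | zero => simp
  | add f g _ _ hf hg => simpa [inner_add_right, add_smul] using hf.add hg
  | smul c f _ hf => simpa [inner_smul_right, mul_smul] using hf.const_smul c

lemma hasSum_inner_mul_inner_right (hf : HasSum (fun n => ⟪v n, f⟫_𝕜 • u n) f) (g : E) :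
    HasSum (fun n => ⟪g, u n⟫_𝕜 * ⟪v n, f⟫_𝕜) ⟪g, f⟫_𝕜 := by
  simpa [inner_smul_right, mul_comm] using (innerSL 𝕜 g).hasSum hf

lemma hasSum_inner_mul_inner_left (hf : HasSum (fun n => ⟪v n, f⟫_𝕜 • u n) f) (g : E) :
    HasSum (fun n => ⟪f, v n⟫_𝕜 * ⟪u n, g⟫_𝕜) ⟪f, g⟫_𝕜 := by
  simpa [mul_comm] using (RCLike.hasSum_conj' 𝕜).2 (hasSum_inner_mul_inner_right hf g)

end Expansion

open Finset in
lemma hasSum_inner_smul_alternating {b x y : ℕ → E} (hb : Orthonormal 𝕜 b)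
    (hx : ∀ n, x n = ∑ k ∈ range (n + 1), (-1 : 𝕜) ^ (n + k) • b k)
    (hy : ∀ n, y n = b n + b (n + 1)) (i : ℕ) :
    HasSum (fun n => ⟪y n, b i⟫_𝕜 • x n) (b i) := by
  have hyb : ∀ n, ⟪y n, b i⟫_𝕜 = (if n = i then 1 else 0) + if n + 1 = i then 1 else 0 := by
    simp [hy, inner_add_left, orthonormal_iff_ite.mp hb]
  cases i with
  | zero =>
    have h := hasSum_single (f := fun n => ⟪y n, b 0⟫_𝕜 • x n) 0 fun n hn => ?_
    · simpa [hyb, hx 0] using h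
    · simp [hyb, hn]
  | succ m =>
    have h : HasSum (fun n => ⟪y n, b (m + 1)⟫_𝕜 • x n)
        (∑ n ∈ {m, m + 1}, ⟪y n, b (m + 1)⟫_𝕜 • x n) :=
      hasSum_sum_of_ne_finset_zero fun n hn => by
        simp only [mem_insert, mem_singleton, not_or] at hn
        simp [hyb, hn.1, hn.2]
    rw [sum_pair (by omega)] at h
    simpa [hyb, add_succ_eq_of_eq_alternating_sum hx] using h

end InnerProduct

theorem stmt10_general {H : Type*} [NormedAddCommGroup H] [InnerProductSpace ℂ H]
    (b : HilbertBasis ℕ ℂ H) (x y : ℕ → H)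
    (hx : ∀ n, x n = ∑ k ∈ Finset.range (n + 1), ((-1 : ℂ)) ^ (n + k) • b k)
    (hy : ∀ n, y n = b n + b (n + 1)) :
    ∀ f ∈ Submodule.span ℂ (Set.range fun n => b n),
      ∀ g ∈ Submodule.span ℂ (Set.range fun n => b n),
        HasSum (fun n => ⟪f, y n⟫_ℂ * ⟪x n, g⟫_ℂ) ⟪f, g⟫_ℂ ∧
        HasSum (fun n => ⟪f, x n⟫_ℂ * ⟪y n, g⟫_ℂ) ⟪f, g⟫_ℂ := by
  have hexpand : ∀ f ∈ Submodule.span ℂ (Set.range fun n => b n),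
      HasSum (fun n => ⟪y n, f⟫_ℂ • x n) f := fun f =>
    hasSum_inner_smul_of_mem_span <| Set.forall_mem_range.2 <|
      hasSum_inner_smul_alternating b.orthonormal hx hy
  exact fun f hf g hg =>
    ⟨hasSum_inner_mul_inner_left (hexpand f hf) g, hasSum_inner_mul_inner_right (hexpand g hg) f⟩

theorem stmt10 {H : Type*} [NormedAddCommGroup H] [InnerProductSpace ℂ H] [CompleteSpace H]
    (b : HilbertBasis ℕ ℂ H) (x y : ℕ → H)
    (hx : ∀ n, x n = ∑ k ∈ Finset.range (n + 1), ((-1 : ℂ)) ^ (n + k) • b k)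
    (hy : ∀ n, y n = b n + b (n + 1)) :
    ∀ f ∈ Submodule.span ℂ (Set.range fun n => b n),
      ∀ g ∈ Submodule.span ℂ (Set.range fun n => b n),
        HasSum (fun n => ⟪f, y n⟫_ℂ * ⟪x n, g⟫_ℂ) ⟪f, g⟫_ℂ ∧
        HasSum (fun n => ⟪f, x n⟫_ℂ * ⟪y n, g⟫_ℂ) ⟪f, g⟫_ℂ :=
  stmt10_general b x y hx hy
end

section
/- Let (x_n), (y_n) be biorthogonal families in H, (α_n) complex, (β_n), (γ_n) positive reals. With H_{x,y}, H_{y,x}, S_x^β, S_y^γ defined by the series above, the intertwining relations (H_{x,y} S_x^β − S_x^β H_{y,x}) y_n = 0 and (H_{y,x} S_y^γ − S_y^γ H_{x,y}) x_n = 0 hold for every n (all operators being applied to vectors in their domains). -/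
open scoped InnerProductSpace
open Filter Topology

/-- Intertwining relations (H_{x,y} S_x^β − S_x^β H_{y,x}) y_k = 0 and
(H_{y,x} S_y^γ − S_y^γ H_{x,y}) x_k = 0, where applying each composition means
summing the corresponding series. -/
theorem stmt18 {H : Type*} [NormedAddCommGroup H] [InnerProductSpace ℂ H] [CompleteSpace H]
    (x y : ℕ → H) (hbi : ∀ n m, ⟪y n, x m⟫_ℂ = if n = m then 1 else 0)
    (α : ℕ → ℂ) (β γ : ℕ → ℝ) (hβpos : ∀ n, 0 < β n) (hγpos : ∀ n, 0 < γ n) :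
    ∀ k,
      (∃ v w : H,
        HasSum (fun n => (α n * ⟪y n, (β k : ℂ) • x k⟫_ℂ) • x n) v ∧
        HasSum (fun n => ((β n : ℂ) * ⟪x n, α k • y k⟫_ℂ) • x n) w ∧
        v - w = 0) ∧
      (∃ v w : H,
        HasSum (fun n => (α n * ⟪x n, (γ k : ℂ) • y k⟫_ℂ) • y n) v ∧
        HasSum (fun n => ((γ n : ℂ) * ⟪y n, α k • x k⟫_ℂ) • y n) w ∧
        v - w = 0) := by
  have hxy : ∀ n m, ⟪x n, y m⟫_ℂ = if n = m then 1 else 0 := by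
    intro n m
    rw [← inner_conj_symm, hbi m n]
    rcases eq_or_ne n m with h | h
    · simp [h]
    · simp [h, h.symm]
  intro k
  constructor
  · refine ⟨(α k * (β k : ℂ)) • x k, (α k * (β k : ℂ)) • x k, ?_, ?_, sub_self _⟩
    · have : (fun n => (α n * ⟪y n, (β k : ℂ) • x k⟫_ℂ) • x n)
          = fun n => if n = k then (α k * (β k : ℂ)) • x k else 0 := by
        funext n
        rw [inner_smul_right, hbi n k]
        split_ifs with h
        · subst h; simp [mul_comm]
        · simp
      rw [this]
      exact hasSum_ite_eq k _
    · have : (fun n => ((β n : ℂ) * ⟪x n, α k • y k⟫_ℂ) • x n)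
          = fun n => if n = k then (α k * (β k : ℂ)) • x k else 0 := by
        funext n
        rw [inner_smul_right, hxy n k]
        split_ifs with h
        · subst h; simp [mul_comm]
        · simp
      rw [this]
      exact hasSum_ite_eq k _
  · refine ⟨(α k * (γ k : ℂ)) • y k, (α k * (γ k : ℂ)) • y k, ?_, ?_, sub_self _⟩
    · have : (fun n => (α n * ⟪x n, (γ k : ℂ) • y k⟫_ℂ) • y n)
          = fun n => if n = k then (α k * (γ k : ℂ)) • y k else 0 := by
        funext n
        rw [inner_smul_right, hxy n k]
        split_ifs with h
        · subst h; simp [mul_comm]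
        · simp
      rw [this]
      exact hasSum_ite_eq k _
    · have : (fun n => ((γ n : ℂ) * ⟪y n, α k • x k⟫_ℂ) • y n)
          = fun n => if n = k then (α k * (γ k : ℂ)) • y k else 0 := by
        funext n
        rw [inner_smul_right, hbi n k]
        split_ifs with h
        · subst h; simp [mul_comm]
        · simp
      rw [this]
      exact hasSum_ite_eq k _
end
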